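/- Suppose each Q_λ − K is closed, and there exists e ∈ K \ {0} such that for every γ ∈ Γ the infimum inf_{λ∈Λ} ℤ₂^{e,K}(P_γ, Q_λ) is attained. Then P ≤_K^U Q if and only if sup_{γ∈Γ} inf_{λ∈Λ} ℤ₂^{e,K}(P_γ, Q_λ) ≤ 0. -/

import Mathlib

open Set Pointwise Filter Topology

/-- Gerstewitz scalarization function. -/
noncomputable def zG {Y : Type*} [AddCommGroup Y] [Module ℝ Y] (e : Y) (K : Set Y) (y : Y) :
    EReal :=
  sInf ((fun t : ℝ => (t : EReal)) '' {t : ℝ | t • e - y ∈ K})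

/-- ℤ₂^{e,K}(A,B) = sup_{a∈A} inf_{b∈B} z^{e,K}(a − b). -/
noncomputable def Ztwo {Y : Type*} [AddCommGroup Y] [Module ℝ Y] (e : Y) (K : Set Y)
    (A B : Set Y) : EReal :=
  ⨆ a ∈ A, ⨅ b ∈ B, zG e K (a - b)

/-! Since `e ∈ K`, the sublevel sets of `zG e K` are `{y | zG e K y < s} ⊆ s • e - K`; letting
`s ↓ 0` and using that `B - K` is closed turns `Ztwo e K A B ≤ 0` into `A ⊆ B - K`. The family
statement follows because the infimum over `λ` is attained. -/

section Scalarization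

variable {Y : Type*} [AddCommGroup Y] [Module ℝ Y]

theorem add_mem_of_convex_of_smul_mem {K : Set Y} (hKconv : Convex ℝ K)
    (hKcone : ∀ c : ℝ, 0 ≤ c → ∀ x ∈ K, c • x ∈ K) {x y : Y} (hx : x ∈ K) (hy : y ∈ K) :
    x + y ∈ K := by
  have hmid : (1 / 2 : ℝ) • x + (1 / 2 : ℝ) • y ∈ K :=
    hKconv hx hy (by norm_num) (by norm_num) (by norm_num)
  simpa [smul_add, smul_smul] using hKcone 2 zero_le_two _ hmid

theorem zG_nonpos_of_neg_mem {e : Y} {K : Set Y} {y : Y} (hy : -y ∈ K) : zG e K y ≤ 0 :=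
  sInf_le ⟨0, by simpa using hy, rfl⟩

theorem smul_sub_mem_of_zG_lt {K : Set Y} (hKadd : ∀ x ∈ K, ∀ y ∈ K, x + y ∈ K)
    (hKcone : ∀ c : ℝ, 0 ≤ c → ∀ x ∈ K, c • x ∈ K) {e : Y} (he : e ∈ K) {y : Y} {s : ℝ}
    (hlt : zG e K y < s) : s • e - y ∈ K := by
  obtain ⟨_, ⟨t, ht, rfl⟩, hts⟩ := sInf_lt_iff.mp hlt
  have hts : t < s := EReal.coe_lt_coe_iff.mp hts
  convert hKadd _ ht _ (hKcone (s - t) (sub_nonneg.mpr hts.le) e he) using 1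
  rw [sub_smul]
  abel

theorem Ztwo_nonpos_of_subset {e : Y} {K A B : Set Y} (h : A ⊆ B - K) : Ztwo e K A B ≤ 0 := by
  refine iSup₂_le fun a ha => ?_
  obtain ⟨b, hb, k, hk, rfl⟩ := h ha
  exact (iInf₂_le b hb).trans (zG_nonpos_of_neg_mem (by simpa using hk))

variable [TopologicalSpace Y] [IsTopologicalAddGroup Y] [ContinuousSMul ℝ Y]

theorem subset_of_Ztwo_nonpos {K : Set Y} (hKadd : ∀ x ∈ K, ∀ y ∈ K, x + y ∈ K)
    (hKcone : ∀ c : ℝ, 0 ≤ c → ∀ x ∈ K, c • x ∈ K) {e : Y} (he : e ∈ K) {A B : Set Y}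
    (hcl : IsClosed (B - K)) (h : Ztwo e K A B ≤ 0) : A ⊆ B - K := by
  intro a ha
  have hinf : ⨅ b ∈ B, zG e K (a - b) ≤ 0 := (le_iSup₂ (f := fun a (_ : a ∈ A) =>
    ⨅ b ∈ B, zG e K (a - b)) a ha).trans h
  have happrox : ∀ s : ℝ, 0 < s → a - s • e ∈ B - K := by
    intro s hs
    obtain ⟨b, hb, hlt⟩ : ∃ b ∈ B, zG e K (a - b) < s := by
      simpa only [iInf_lt_iff, exists_prop] using hinf.trans_lt (EReal.coe_pos.mpr hs)
    exact ⟨b, hb, _, smul_sub_mem_of_zG_lt hKadd hKcone he hlt, by dsimp only; abel⟩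
  have hlim : Tendsto (fun s : ℝ => a - s • e) (𝓝[>] 0) (𝓝 a) := by
    have hcont : Tendsto (fun s : ℝ => a - s • e) (𝓝 0) (𝓝 (a - (0 : ℝ) • e)) :=
      tendsto_const_nhds.sub (tendsto_id.smul_const e)
    rw [zero_smul, sub_zero] at hcont
    exact tendsto_nhdsWithin_of_tendsto_nhds hcont
  exact hcl.mem_of_tendsto hlim (eventually_nhdsWithin_of_forall happrox)

theorem Ztwo_nonpos_iff_subset {K : Set Y} (hKadd : ∀ x ∈ K, ∀ y ∈ K, x + y ∈ K)
    (hKcone : ∀ c : ℝ, 0 ≤ c → ∀ x ∈ K, c • x ∈ K) {e : Y} (he : e ∈ K) {A B : Set Y}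
    (hcl : IsClosed (B - K)) : Ztwo e K A B ≤ 0 ↔ A ⊆ B - K :=
  ⟨subset_of_Ztwo_nonpos hKadd hKcone he hcl, Ztwo_nonpos_of_subset⟩

end Scalarization

theorem stmt_16_general {Y Γ Λ : Type*} [AddCommGroup Y] [Module ℝ Y] [TopologicalSpace Y]
    [IsTopologicalAddGroup Y] [ContinuousSMul ℝ Y]
    (K : Set Y) (hKconv : Convex ℝ K)
    (hKcone : ∀ (c : ℝ), 0 ≤ c → ∀ x ∈ K, c • x ∈ K)
    (P : Γ → Set Y) (Q : Λ → Set Y)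
    (hQKcl : ∀ lam, IsClosed (Q lam - K))
    (e : Y) (he : e ∈ K \ {0})
    (hatt : ∀ γ : Γ, ∃ lam : Λ, Ztwo e K (P γ) (Q lam) = ⨅ lam', Ztwo e K (P γ) (Q lam')) :
    (∀ γ : Γ, ∃ lam : Λ, P γ ⊆ Q lam - K) ↔
      (⨆ γ : Γ, ⨅ lam : Λ, Ztwo e K (P γ) (Q lam)) ≤ 0 := by
  have hKadd : ∀ x ∈ K, ∀ y ∈ K, x + y ∈ K := fun _ hx _ hy =>
    add_mem_of_convex_of_smul_mem hKconv hKcone hx hy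
  have hiff := fun γ lam => Ztwo_nonpos_iff_subset (A := P γ) hKadd hKcone he.1 (hQKcl lam)
  constructor
  · intro h
    refine iSup_le fun γ => ?_
    obtain ⟨lam, hlam⟩ := h γ
    exact (iInf_le _ lam).trans ((hiff γ lam).mpr hlam)
  · intro h γ
    obtain ⟨lam, hlam⟩ := hatt γ
    refine ⟨lam, (hiff γ lam).mp ?_⟩
    rw [hlam]
    exact (le_iSup (fun γ => ⨅ lam, Ztwo e K (P γ) (Q lam)) γ).trans h

/-- with each Q_λ − K closed and attainment of inf_λ ℤ₂^{e,K}(P_γ,Q_λ),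
    P ≤_K^U Q iff sup_γ inf_λ ℤ₂^{e,K}(P_γ, Q_λ) ≤ 0. -/
theorem stmt_16 {Y Γ Λ : Type*} [AddCommGroup Y] [Module ℝ Y] [TopologicalSpace Y]
    [IsTopologicalAddGroup Y] [ContinuousSMul ℝ Y]
    (K : Set Y) (hKne : K.Nonempty) (hKcl : IsClosed K) (hKconv : Convex ℝ K)
    (hKcone : ∀ (c : ℝ), 0 ≤ c → ∀ x ∈ K, c • x ∈ K) (hKproper : K ≠ univ)
    (hKpointed : K ∩ (-K) ⊆ {0})
    (P : Γ → Set Y) (Q : Λ → Set Y)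
    (hP : ∀ γ, (P γ).Nonempty) (hQ : ∀ lam, (Q lam).Nonempty)
    (hQKcl : ∀ lam, IsClosed (Q lam - K))
    (e : Y) (he : e ∈ K \ {0})
    (hatt : ∀ γ : Γ, ∃ lam : Λ, Ztwo e K (P γ) (Q lam) = ⨅ lam', Ztwo e K (P γ) (Q lam')) :
    (∀ γ : Γ, ∃ lam : Λ, P γ ⊆ Q lam - K) ↔
      (⨆ γ : Γ, ⨅ lam : Λ, Ztwo e K (P γ) (Q lam)) ≤ 0 :=
  stmt_16_general K hKconv hKcone P Q hQKcl e he hatt
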